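/- arXiv:0904.3358 — 2 statements merged into one kernel-verified Lean document; each statement's English description precedes it below -/
import Mathlib

section
/- Let G be a finite group acting by ring automorphisms on a commutative ring A with |G| invertible in A. For every ideal I of the invariant subring A^G, the contraction of the extension of I equals I; that is, (I · A) ∩ A^G = I. -/
/-!
Averaging over `G` gives the Reynolds operator `A → A^G`, which is `A^G`-linear and restricts
to the identity on `A^G`. Any such linear retraction `ρ` of `R → S` forces `(I·S) ∩ R = I`:
`ρ` maps `I·S = I • S` into `I • R = I`, and fixes every `r ∈ R`.
-/

/-- The subring of `G`-invariant elements of `A`. -/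
def fixedSubring (G A : Type*) [Monoid G] [CommRing A] [MulSemiringAction G A] : Subring A where
  carrier := {a | ∀ g : G, g • a = a}
  mul_mem' := by intro a b ha hb g; rw [smul_mul', ha g, hb g]
  one_mem' := fun g => smul_one g
  add_mem' := by intro a b ha hb g; rw [smul_add, ha g, hb g]
  zero_mem' := fun g => smul_zero g
  neg_mem' := by intro a ha g; rw [smul_neg, ha g]

theorem Ideal.comap_map_eq_self_of_retraction {R S : Type*} [CommSemiring R] [CommSemiring S]
    [Algebra R S] (ρ : S →ₗ[R] R) (hρ : ∀ r, ρ (algebraMap R S r) = r) (I : Ideal R) :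
    (I.map (algebraMap R S)).comap (algebraMap R S) = I := by
  refine le_antisymm (fun r hr => ?_) le_comap_map
  have hρI : (I • (⊤ : Submodule R S)).map ρ ≤ I := by
    rw [Submodule.map_smul'']
    exact Submodule.smul_le.2 fun i hi s _ => I.mul_mem_right s hi
  rw [← hρ r]
  exact hρI ⟨_, by rwa [Ideal.smul_top_eq_map], rfl⟩

theorem smul_invOf_natCast {G A : Type*} [Monoid G] [Semiring A] [MulSemiringAction G A]
    (g : G) (n : ℕ) [Invertible (n : A)] : g • ⅟(n : A) = ⅟(n : A) := by
  refine (invOf_eq_right_inv ?_).symm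
  have h := congrArg (g • ·) (mul_invOf_self (n : A))
  have hn : g • (n : A) = n := map_natCast (MulSemiringAction.toRingHom G A g) n
  simpa only [smul_mul', smul_one, hn] using h

namespace fixedSubring

variable (G A : Type*) [Group G] [Fintype G] [CommRing A] [MulSemiringAction G A]

theorem sum_smul_mem (a : A) : ∑ g : G, g • a ∈ fixedSubring G A := fun h => by
  rw [Finset.smul_sum]
  exact Fintype.sum_equiv (Equiv.mulLeft h) _ _ fun g => (mul_smul h g a).symm

variable [Invertible (Fintype.card G : A)]

noncomputable def reynolds : A →ₗ[fixedSubring G A] fixedSubring G A where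
  toFun a := ⟨⅟(Fintype.card G : A) * ∑ g : G, g • a, fun h => by
    rw [smul_mul', smul_invOf_natCast, sum_smul_mem G A a h]⟩
  map_add' a b := by
    ext
    simp only [smul_add, Finset.sum_add_distrib, mul_add, Subring.coe_add]
  map_smul' r a := by
    ext
    simp only [Subring.smul_def, smul_eq_mul, smul_mul', r.2 _, ← Finset.mul_sum,
      RingHom.id_apply, Subring.coe_mul]
    ring

theorem reynolds_algebraMap (r : fixedSubring G A) :
    reynolds G A (algebraMap (fixedSubring G A) A r) = r := by
  ext
  change ⅟(Fintype.card G : A) * ∑ g : G, g • (r : A) = r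
  rw [Fintype.sum_congr _ _ r.2, Finset.sum_const, nsmul_eq_mul, Finset.card_univ,
    invOf_mul_cancel_left]

end fixedSubring

/-- For a finite group `G` with `|G|` invertible in `A`, every ideal `I` of the invariant
subring satisfies `(I·A) ∩ A^G = I`. -/
theorem contraction_of_extension_eq (G A : Type*) [Group G] [Fintype G] [CommRing A]
    [MulSemiringAction G A] [Invertible ((Fintype.card G : A))]
    (I : Ideal (fixedSubring G A)) :
    (I.map (fixedSubring G A).subtype).comap (fixedSubring G A).subtype = I :=
  Ideal.comap_map_eq_self_of_retraction _ (fixedSubring.reynolds_algebraMap G A) I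
end

section
/- Let G be a finite group acting by ring automorphisms on a commutative ring A with |G| invertible in A, and let J ⊆ A be a G-invariant ideal. Then the natural map lim_n A^G/(Jⁿ ∩ A^G) → (lim_n A/Jⁿ)^G is an isomorphism of rings; i.e., the completion of the invariant ring along the filtration (Jⁿ ∩ A^G) is the invariant ring of the J-adic completion of A. -/
/-- The inverse limit of a tower of commutative rings `t n : R (n+1) →+* R n`, as a subring
of the product. -/
def invLim (R : ℕ → Type*) [∀ n, CommRing (R n)] (t : ∀ n, R (n + 1) →+* R n) :
    Subring (∀ n, R n) where
  carrier := {x | ∀ n, t n (x (n + 1)) = x n}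
  mul_mem' := by intro x y hx hy n; simp only [Pi.mul_apply, map_mul, hx n, hy n]
  one_mem' := by intro n; simp only [Pi.one_apply, map_one]
  add_mem' := by intro x y hx hy n; simp only [Pi.add_apply, map_add, hx n, hy n]
  zero_mem' := by intro n; simp only [Pi.zero_apply, map_zero]
  neg_mem' := by intro x hx n; simp only [Pi.neg_apply, map_neg, hx n]

/-!
Averaging over `G` (the Reynolds operator `a ↦ |G|⁻¹ ∑ g • a`) turns any `a` with
`g • a ≡ a` mod `Jⁿ` for all `g` into an invariant element congruent to `a` mod `Jⁿ`.
Hence at each level the injective map `A^G/(Jⁿ ∩ A^G) → A/Jⁿ` has image the invariant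
classes. Since the level maps are injective, a compatible family of classes that lie
levelwise in their images lifts to a compatible family upstairs, which gives the statement
in the limit.
-/

namespace invLim

variable {R S : ℕ → Type*} [∀ n, CommRing (R n)] [∀ n, CommRing (S n)]
  {t : ∀ n, R (n + 1) →+* R n} {s : ∀ n, S (n + 1) →+* S n}

def map (f : ∀ n, R n →+* S n) (hf : ∀ n, (s n).comp (f (n + 1)) = (f n).comp (t n)) :
    invLim R t →+* invLim S s :=
  RingHom.codRestrict
    ((RingHom.pi fun n => (f n).comp (Pi.evalRingHom R n)).comp (invLim R t).subtype) _
    fun u n => (RingHom.congr_fun (hf n) (u.1 (n + 1))).trans (congrArg (f n) (u.2 n))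

theorem map_injective {f : ∀ n, R n →+* S n}
    (hf : ∀ n, (s n).comp (f (n + 1)) = (f n).comp (t n))
    (hinj : ∀ n, Function.Injective (f n)) : Function.Injective (map f hf) :=
  fun _ _ h => Subtype.ext <| funext fun n => hinj n (congrArg (fun v => v.1 n) h)

theorem exists_map_eq_iff {f : ∀ n, R n →+* S n}
    (hf : ∀ n, (s n).comp (f (n + 1)) = (f n).comp (t n))
    (hinj : ∀ n, Function.Injective (f n)) (v : invLim S s) :
    (∃ u, map f hf u = v) ↔ ∀ n, ∃ x, f n x = v.1 n := by
  constructor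
  · rintro ⟨u, rfl⟩ n
    exact ⟨u.1 n, rfl⟩
  · intro h
    choose x hx using h
    have hcompat : ∀ n, t n (x (n + 1)) = x n := fun n => hinj n <| by
      rw [← RingHom.comp_apply, ← hf, RingHom.comp_apply, hx, hx, v.2 n]
    exact ⟨⟨x, hcompat⟩, Subtype.ext <| funext hx⟩

end invLim

theorem Ideal.Quotient.factor_comp_quotientMap {R S : Type*} [CommRing R] [CommRing S]
    (f : R →+* S) {I I' : Ideal S} (hI : I ≤ I') :
    (Ideal.Quotient.factor hI).comp (Ideal.quotientMap I f le_rfl) =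
      (Ideal.quotientMap I' f le_rfl).comp (Ideal.Quotient.factor (Ideal.comap_mono hI)) :=
  Ideal.Quotient.ringHom_ext rfl

section Reynolds

variable {G A : Type*} [Group G] [CommRing A] [MulSemiringAction G A]

theorem Ideal.smul_mem_pow {J : Ideal A} (hJ : ∀ g : G, ∀ a ∈ J, g • a ∈ J) (n : ℕ)
    (g : G) {a : A} (ha : a ∈ J ^ n) : g • a ∈ J ^ n := by
  have hmap : J.map (MulSemiringAction.toRingHom G A g) ≤ J :=
    Ideal.map_le_iff_le_comap.mpr (hJ g)
  have hmap_pow : (J ^ n).map (MulSemiringAction.toRingHom G A g) ≤ J ^ n := by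
    rw [Ideal.map_pow]
    exact Ideal.pow_right_mono hmap n
  exact hmap_pow (Ideal.mem_map_of_mem _ ha)

variable [Fintype G] [Invertible (Fintype.card G : A)]

variable (G) in
def reynolds (a : A) : A := ⅟(Fintype.card G : A) * ∑ g : G, g • a

theorem reynolds_mem_fixedSubring (a : A) : reynolds G a ∈ fixedSubring G A := fun h => by
  have hcard : h • (⅟(Fintype.card G : A)) = ⅟(Fintype.card G : A) := by
    have hnat : h • (Fintype.card G : A) = Fintype.card G :=
      map_natCast (MulSemiringAction.toRingHom G A h) _
    refine (invOf_eq_right_inv ?_).symm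
    calc (Fintype.card G : A) * h • ⅟(Fintype.card G : A)
        = h • ((Fintype.card G : A) * ⅟(Fintype.card G : A)) := by rw [smul_mul', hnat]
      _ = 1 := by rw [mul_invOf_self, smul_one]
  have hsum : h • ∑ g : G, g • a = ∑ g : G, g • a := by
    simp only [Finset.smul_sum, smul_smul]
    exact Fintype.sum_equiv (Equiv.mulLeft h) _ _ fun _ => rfl
  rw [reynolds, smul_mul', hcard, hsum]

theorem reynolds_sub_mem {I : Ideal A} {a : A} (ha : ∀ g : G, g • a - a ∈ I) :
    reynolds G a - a ∈ I := by
  have h : reynolds G a - a = ⅟(Fintype.card G : A) * ∑ g : G, (g • a - a) := by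
    rw [reynolds, Finset.sum_sub_distrib, mul_sub, Finset.sum_const, Finset.card_univ,
      nsmul_eq_mul, invOf_mul_cancel_left]
  rw [h]
  exact I.mul_mem_left _ (I.sum_mem fun g _ => ha g)

theorem exists_quotientMap_fixedSubring_eq_iff {I : Ideal A}
    (hI : ∀ g : G, ∀ a ∈ I, g • a ∈ I) (x : A ⧸ I) :
    (∃ y, Ideal.quotientMap I (fixedSubring G A).subtype le_rfl y = x) ↔
      ∀ a, Ideal.Quotient.mk I a = x → ∀ g : G, g • a - a ∈ I := by
  constructor
  · rintro ⟨y, rfl⟩ a ha g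
    obtain ⟨c, rfl⟩ := Ideal.Quotient.mk_surjective y
    rw [Ideal.quotientMap_mk, Ideal.Quotient.eq] at ha
    have hsplit : g • a - a = g • (a - c) - (a - c) := by
      rw [smul_sub, c.2 g]
      ring
    rw [hsplit]
    exact sub_mem (hI g _ ha) ha
  · intro h
    obtain ⟨a, rfl⟩ := Ideal.Quotient.mk_surjective x
    refine ⟨Ideal.Quotient.mk _ ⟨reynolds G a, reynolds_mem_fixedSubring a⟩, ?_⟩
    rw [Ideal.quotientMap_mk, Ideal.Quotient.eq]
    exact reynolds_sub_mem (h a rfl)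

end Reynolds

/-- Completion of the invariant ring along `(Jⁿ ∩ A^G)` is the invariant ring of the
`J`-adic completion: the natural ring homomorphism
`lim A^G/(Jⁿ ∩ A^G) → lim A/Jⁿ` (given componentwise by the maps induced by the
inclusion `A^G ⊆ A`) is injective with range exactly the `G`-invariant elements
(those all of whose componentwise representatives `a` satisfy `g • a - a ∈ Jⁿ`). -/
theorem completion_of_invariants (G A : Type*) [Group G] [Fintype G] [CommRing A]
    [MulSemiringAction G A] [Invertible ((Fintype.card G : A))]
    (J : Ideal A) (hJ : ∀ (g : G), ∀ a ∈ J, g • a ∈ J) :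
    ∃ F : invLim (fun n => (fixedSubring G A) ⧸ (J ^ n).comap (fixedSubring G A).subtype)
            (fun n => Ideal.Quotient.factor
              (Ideal.comap_mono (Ideal.pow_le_pow_right (Nat.le_succ n)))) →+*
          invLim (fun n => A ⧸ J ^ n)
            (fun n => Ideal.Quotient.factor
              (Ideal.pow_le_pow_right (Nat.le_succ n))),
      (∀ u n, (F u).1 n =
        Ideal.quotientMap (J ^ n) (fixedSubring G A).subtype le_rfl (u.1 n)) ∧
      Function.Injective F ∧
      (∀ v, ((∀ n, ∀ a : A, Ideal.Quotient.mk (J ^ n) a = v.1 n →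
          ∀ g : G, g • a - a ∈ J ^ n) ↔ ∃ u, F u = v)) := by
  have hcompat := fun n => Ideal.Quotient.factor_comp_quotientMap (fixedSubring G A).subtype
    (Ideal.pow_le_pow_right (I := J) (Nat.le_succ n))
  have hinj : ∀ n, Function.Injective
      (Ideal.quotientMap (J ^ n) (fixedSubring G A).subtype le_rfl) :=
    fun _ => Ideal.quotientMap_injective
  refine ⟨invLim.map _ hcompat, fun _ _ => rfl, invLim.map_injective hcompat hinj, fun v => ?_⟩
  rw [invLim.exists_map_eq_iff hcompat hinj]
  exact forall_congr' fun n =>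
    (exists_quotientMap_fixedSubring_eq_iff (Ideal.smul_mem_pow hJ n) (v.1 n)).symm
end
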